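/- Fix t > 0 and consider the curve in ℝ² parametrized by r > 0 given by X(r) = −3/(2t) + r²/(4t²) − 1 and Y(r) = (r/(2t) + Z(r))², where Z(r) = coth r − 1/r. Then Y is a concave function of X; i.e., d²Y/dX² ≤ 0 for all r > 0. -/

import Mathlib

/-!
Write `u = r / (2t)`. Then `X + 3/(2t) + 1 = u²` and `Y = g u` with `g u = (u + Z (2tu))²`, so the
chain rule through `u = √s` gives `d²Y/dX² = (u g''(u) - g'(u)) / (4u³)`, which works out to
`(4t³/r³)(r²Z'' + rZ' - Z) + (8t⁴/r³)(rZZ'' + rZ'² - ZZ')`. The second bracket is `≤ 0` because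
`Z ≥ 0`, `Z' ≥ 0`, `Z'' ≤ 0` and `rZ' ≤ Z`. Once the powers of `sinh r` are cleared, each of these
facts and the first bracket become inequalities between polynomials in `r`, `sinh r`, `cosh r`.
Each of those holds at `r = 0` and follows on `[0, ∞)` by comparing derivatives, repeatedly where
needed.
-/

noncomputable def Z : ℝ → ℝ := fun r => Real.cosh r / Real.sinh r - 1 / r

/-- `Y` as a function of `X`, where `X(r) = -3/(2t) + r²/(4t²) - 1` and
`Y(r) = (r/(2t) + Z(r))²`; inverting, `r = 2t√(X + 3/(2t) + 1)`. -/
noncomputable def YofX (t : ℝ) : ℝ → ℝ := fun X =>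
  (Real.sqrt (X + 3 / (2 * t) + 1) + Z (2 * t * Real.sqrt (X + 3 / (2 * t) + 1))) ^ 2

open Real Set Filter Topology

lemma le_of_hasDerivAt_le {f g f' g' : ℝ → ℝ} (hf : ∀ x, HasDerivAt f (f' x) x)
    (hg : ∀ x, HasDerivAt g (g' x) x) (h₀ : f 0 ≤ g 0) (h' : ∀ x, 0 ≤ x → f' x ≤ g' x)
    {r : ℝ} (hr : 0 ≤ r) : f r ≤ g r :=
  image_le_of_deriv_right_le_deriv_boundary (b := r)
    (fun x _ => (hf x).continuousAt.continuousWithinAt) (fun x _ => (hf x).hasDerivWithinAt) h₀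
    (fun x _ => (hg x).continuousAt.continuousWithinAt) (fun x _ => (hg x).hasDerivWithinAt)
    (fun x hx => h' x hx.1) ⟨hr, le_rfl⟩

lemma sinh_le_mul_cosh {r : ℝ} (hr : 0 ≤ r) : sinh r ≤ r * cosh r :=
  le_of_hasDerivAt_le (g := fun x => x * cosh x) hasDerivAt_sinh
    (fun x => (hasDerivAt_id' x).mul (hasDerivAt_cosh x)) (by simp)
    (fun x hx => by nlinarith [sinh_nonneg_iff.mpr hx]) hr

lemma one_add_sq_div_two_le_cosh {r : ℝ} (hr : 0 ≤ r) : 1 + r ^ 2 / 2 ≤ cosh r :=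
  le_of_hasDerivAt_le (f := fun x => 1 + x ^ 2 / 2)
    (fun x => ((hasDerivAt_pow 2 x).div_const 2).const_add 1) hasDerivAt_cosh (by simp)
    (fun x hx => by simpa using self_le_sinh_iff.mpr hx) hr

lemma add_pow_three_div_six_le_sinh {r : ℝ} (hr : 0 ≤ r) : r + r ^ 3 / 6 ≤ sinh r :=
  le_of_hasDerivAt_le (f := fun x => x + x ^ 3 / 6)
    (fun x => (hasDerivAt_id' x).add ((hasDerivAt_pow 3 x).div_const 6)) hasDerivAt_sinh
    (by simp) (fun x hx => by norm_num; linarith [one_add_sq_div_two_le_cosh hx]) hr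

lemma sub_pow_three_div_three_mul_cosh_le_sinh {r : ℝ} (hr : 0 ≤ r) :
    (r - r ^ 3 / 3) * cosh r ≤ sinh r :=
  le_of_hasDerivAt_le (f := fun x => (x - x ^ 3 / 3) * cosh x)
    (fun x => ((hasDerivAt_id' x).sub ((hasDerivAt_pow 3 x).div_const 3)).mul (hasDerivAt_cosh x))
    hasDerivAt_sinh (by simp) (fun x hx => by
      norm_num
      nlinarith [mul_le_mul_of_nonneg_left (sinh_le_mul_cosh hx) hx,
        mul_nonneg (pow_nonneg hx 3) (sinh_nonneg_iff.mpr hx)]) hr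

lemma two_mul_sq_mul_cosh_le {r : ℝ} (hr : 0 ≤ r) :
    2 * r ^ 2 * cosh r ≤ r * sinh r + cosh r * sinh r ^ 2 := by
  have h₁ := add_pow_three_div_six_le_sinh hr
  have h₂ := sub_pow_three_div_three_mul_cosh_le_sinh hr
  have hsq : r ^ 2 + r ^ 4 / 3 ≤ sinh r ^ 2 := by
    nlinarith [pow_le_pow_left₀ (by positivity) h₁ 2, pow_nonneg hr 6]
  nlinarith [mul_le_mul_of_nonneg_left hsq (cosh_pos r).le, mul_le_mul_of_nonneg_left h₂ hr]

lemma three_mul_sinh_mul_cosh_le {r : ℝ} (hr : 0 ≤ r) :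
    3 * sinh r * cosh r ≤ r * (sinh r ^ 2 + cosh r ^ 2) + 2 * r :=
  le_of_hasDerivAt_le (f := fun x => 3 * sinh x * cosh x)
    (g := fun x => x * (sinh x ^ 2 + cosh x ^ 2) + 2 * x)
    (fun x => ((hasDerivAt_sinh x).const_mul 3).mul (hasDerivAt_cosh x))
    (fun x => ((hasDerivAt_id' x).mul (((hasDerivAt_sinh x).pow 2).add
      ((hasDerivAt_cosh x).pow 2))).add ((hasDerivAt_id' x).const_mul 2)) (by simp)
    (fun x hx => by
      norm_num
      nlinarith [mul_nonneg (sinh_nonneg_iff.mpr hx) (sub_nonneg.mpr (sinh_le_mul_cosh hx)),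
        cosh_sq x]) hr

lemma two_mul_sinh_sq_le {r : ℝ} (hr : 0 ≤ r) :
    2 * sinh r ^ 2 ≤ r * cosh r * sinh r + r ^ 2 :=
  le_of_hasDerivAt_le (f := fun x => 2 * sinh x ^ 2)
    (g := fun x => x * cosh x * sinh x + x ^ 2)
    (fun x => ((hasDerivAt_sinh x).pow 2).const_mul 2)
    (fun x => (((hasDerivAt_id' x).mul (hasDerivAt_cosh x)).mul (hasDerivAt_sinh x)).add
      (hasDerivAt_pow 2 x)) (by simp)
    (fun x hx => by norm_num; nlinarith [three_mul_sinh_mul_cosh_le hx]) hr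

lemma pow_three_mul_cosh_le_sinh_pow_three {r : ℝ} (hr : 0 ≤ r) :
    r ^ 3 * cosh r ≤ sinh r ^ 3 := by
  have h₂ {x : ℝ} (hx : 0 ≤ x) : 6 * x * cosh x + 6 * x ^ 2 * sinh x + x ^ 3 * cosh x ≤
      6 * sinh x * cosh x ^ 2 + 3 * sinh x ^ 3 :=
    le_of_hasDerivAt_le
      (f := fun x => 6 * x * cosh x + 6 * x ^ 2 * sinh x + x ^ 3 * cosh x)
      (g := fun x => 6 * sinh x * cosh x ^ 2 + 3 * sinh x ^ 3)
      (fun x => ((((hasDerivAt_id' x).const_mul 6).mul (hasDerivAt_cosh x)).add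
        (((hasDerivAt_pow 2 x).const_mul 6).mul (hasDerivAt_sinh x))).add
        ((hasDerivAt_pow 3 x).mul (hasDerivAt_cosh x)))
      (fun x => (((hasDerivAt_sinh x).const_mul 6).mul ((hasDerivAt_cosh x).pow 2)).add
        (((hasDerivAt_sinh x).pow 3).const_mul 3)) (by simp)
      (fun y hy => by
        have hs := sinh_nonneg_iff.mpr hy
        have hsy := self_le_sinh_iff.mpr hy
        have hsc : y * (1 + y ^ 2 / 2) ≤ sinh y * cosh y :=
          mul_le_mul hsy (one_add_sq_div_two_le_cosh hy) (by positivity) hs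
        have hc3 : cosh y ^ 3 = cosh y + cosh y * sinh y ^ 2 := by
          linear_combination cosh y * cosh_sq y
        norm_num
        nlinarith [mul_le_mul_of_nonneg_left hsc hs,
          mul_le_mul_of_nonneg_right (pow_le_pow_left₀ hy hsy 2) (cosh_pos y).le,
          mul_nonneg (pow_nonneg hy 3) hs]) hx
  have h₁ {x : ℝ} (hx : 0 ≤ x) : 3 * x ^ 2 * cosh x + x ^ 3 * sinh x ≤ 3 * sinh x ^ 2 * cosh x :=
    le_of_hasDerivAt_le
      (f := fun x => 3 * x ^ 2 * cosh x + x ^ 3 * sinh x)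
      (g := fun x => 3 * sinh x ^ 2 * cosh x)
      (fun x => (((hasDerivAt_pow 2 x).const_mul 3).mul (hasDerivAt_cosh x)).add
        ((hasDerivAt_pow 3 x).mul (hasDerivAt_sinh x)))
      (fun x => (((hasDerivAt_sinh x).pow 2).const_mul 3).mul (hasDerivAt_cosh x)) (by simp)
      (fun y hy => by norm_num; nlinarith [h₂ hy]) hx
  exact le_of_hasDerivAt_le (f := fun x => x ^ 3 * cosh x) (g := fun x => sinh x ^ 3)
    (fun x => (hasDerivAt_pow 3 x).mul (hasDerivAt_cosh x)) (fun x => (hasDerivAt_sinh x).pow 3)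
    (by simp) (fun y hy => by norm_num; nlinarith [h₁ hy]) hr

noncomputable def Z' (x : ℝ) : ℝ := 1 / x ^ 2 - 1 / sinh x ^ 2

noncomputable def Z'' (x : ℝ) : ℝ := -2 / x ^ 3 + 2 * cosh x / sinh x ^ 3

lemma hasDerivAt_Z {x : ℝ} (hx : x ≠ 0) : HasDerivAt Z (Z' x) x := by
  have hs : sinh x ≠ 0 := sinh_ne_zero.mpr hx
  have hZ : Z = fun y => cosh y / sinh y - y⁻¹ := funext fun y => by simp only [Z, one_div]
  rw [hZ]
  refine (((hasDerivAt_cosh x).div (hasDerivAt_sinh x) hs).sub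
    ((hasDerivAt_id' x).inv hx)).congr_deriv ?_
  simp only [Z']
  field_simp
  linear_combination -x ^ 2 * cosh_sq x

lemma hasDerivAt_Z' {x : ℝ} (hx : x ≠ 0) : HasDerivAt Z' (Z'' x) x := by
  have hs : sinh x ≠ 0 := sinh_ne_zero.mpr hx
  have hZ' : Z' = fun y => (y ^ 2)⁻¹ - (sinh y ^ 2)⁻¹ :=
    funext fun y => by simp only [Z', one_div]
  rw [hZ']
  refine (((hasDerivAt_pow 2 x).inv (pow_ne_zero 2 hx)).sub
    (((hasDerivAt_sinh x).fun_pow 2).inv (pow_ne_zero 2 hs))).congr_deriv ?_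
  simp only [Z'']
  field_simp
  ring

section

variable {r : ℝ}

lemma Z_nonneg (hr : 0 < r) : 0 ≤ Z r := by
  have hs : 0 < sinh r := sinh_pos_iff.mpr hr
  have h : Z r = (r * cosh r - sinh r) / (r * sinh r) := by
    simp only [Z]; field_simp
  rw [h]
  exact div_nonneg (by linarith [sinh_le_mul_cosh hr.le]) (by positivity)

lemma Z'_nonneg (hr : 0 < r) : 0 ≤ Z' r := by
  have hs : 0 < sinh r := sinh_pos_iff.mpr hr
  have h : Z' r = (sinh r ^ 2 - r ^ 2) / (r ^ 2 * sinh r ^ 2) := by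
    simp only [Z']; field_simp
  rw [h]
  exact div_nonneg (by nlinarith [self_le_sinh_iff.mpr hr.le]) (by positivity)

lemma Z''_nonpos (hr : 0 < r) : Z'' r ≤ 0 := by
  have hs : 0 < sinh r := sinh_pos_iff.mpr hr
  have h : Z'' r = 2 * (r ^ 3 * cosh r - sinh r ^ 3) / (r ^ 3 * sinh r ^ 3) := by
    simp only [Z'']; field_simp; ring
  rw [h]
  exact div_nonpos_of_nonpos_of_nonneg
    (by linarith [pow_three_mul_cosh_le_sinh_pow_three hr.le]) (by positivity)

lemma mul_Z'_le_Z (hr : 0 < r) : r * Z' r ≤ Z r := by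
  have hs : 0 < sinh r := sinh_pos_iff.mpr hr
  have h : Z r - r * Z' r =
      (r * cosh r * sinh r + r ^ 2 - 2 * sinh r ^ 2) / (r * sinh r ^ 2) := by
    simp only [Z, Z']; field_simp; ring
  have := div_nonneg (sub_nonneg.mpr (two_mul_sinh_sq_le hr.le))
    (by positivity : 0 ≤ r * sinh r ^ 2)
  linarith

lemma sq_mul_Z''_add_mul_Z'_sub_Z_nonpos (hr : 0 < r) : r ^ 2 * Z'' r + r * Z' r - Z r ≤ 0 := by
  have hs : 0 < sinh r := sinh_pos_iff.mpr hr
  have h : r ^ 2 * Z'' r + r * Z' r - Z r =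
      (2 * r ^ 2 * cosh r - r * sinh r - cosh r * sinh r ^ 2) / sinh r ^ 3 := by
    simp only [Z'', Z', Z]; field_simp; ring
  rw [h]
  exact div_nonpos_of_nonpos_of_nonneg
    (by linarith [two_mul_sq_mul_cosh_le hr.le]) (by positivity)

lemma mul_Z_mul_Z''_add_mul_Z'_sq_sub_Z_mul_Z'_nonpos (hr : 0 < r) :
    r * Z r * Z'' r + r * Z' r ^ 2 - Z r * Z' r ≤ 0 := by
  have h₁ : r * Z r * Z'' r ≤ 0 :=
    mul_nonpos_of_nonneg_of_nonpos (mul_nonneg hr.le (Z_nonneg hr)) (Z''_nonpos hr)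
  have h₂ : Z' r * (r * Z' r - Z r) ≤ 0 :=
    mul_nonpos_of_nonneg_of_nonpos (Z'_nonneg hr) (sub_nonpos.mpr (mul_Z'_le_Z hr))
  linarith

end

lemma deriv_deriv_comp_sqrt {g g' : ℝ → ℝ} {g'' u : ℝ} (hu : 0 < u)
    (hg : ∀ v, 0 < v → HasDerivAt g (g' v) v) (hg' : HasDerivAt g' g'' u) :
    deriv (deriv fun y => g √y) (u ^ 2) = (u * g'' - g' u) / (4 * u ^ 3) := by
  have hu2 : 0 < u ^ 2 := by positivity
  have hsqrt : HasDerivAt (√·) (1 / (2 * u)) (u ^ 2) := by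
    simpa [sqrt_sq hu.le] using hasDerivAt_sqrt hu2.ne'
  have hderiv : deriv (fun y => g √y) =ᶠ[𝓝 (u ^ 2)] fun y => g' √y * (1 / (2 * √y)) :=
    eventually_of_mem (Ioi_mem_nhds hu2) fun y hy =>
      ((hg _ (sqrt_pos.mpr hy)).comp y (hasDerivAt_sqrt (ne_of_gt hy))).deriv
  have h : HasDerivAt (fun y => g' √y * (1 / (2 * √y))) _ (u ^ 2) :=
    (hg'.comp_of_eq (u ^ 2) hsqrt (sqrt_sq hu.le).symm).mul
      ((hasDerivAt_const _ 1).div (hsqrt.const_mul 2) (by simp [sqrt_sq hu.le, hu.ne']))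
  rw [hderiv.deriv_eq, h.deriv, Function.comp_apply, sqrt_sq hu.le]
  field_simp
  ring

lemma deriv_deriv_YofX {t r : ℝ} (ht : 0 < t) (hr : 0 < r) :
    deriv (deriv (YofX t)) (-3 / (2 * t) + r ^ 2 / (4 * t ^ 2) - 1) =
      4 * t ^ 3 / r ^ 3 * (r ^ 2 * Z'' r + r * Z' r - Z r) +
      8 * t ^ 4 / r ^ 3 * (r * Z r * Z'' r + r * Z' r ^ 2 - Z r * Z' r) := by
  set c := 3 / (2 * t) + 1
  set u := r / (2 * t) with hu_def
  have hu : 0 < u := by positivity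
  have hr_eq : 2 * t * u = r := by rw [hu_def]; field_simp
  have hX : -3 / (2 * t) + r ^ 2 / (4 * t ^ 2) - 1 = u ^ 2 - c := by
    simp only [hu_def, c]; ring
  set g : ℝ → ℝ := fun v => (v + Z (2 * t * v)) ^ 2
  have hY : YofX t = fun X => g √(X + c) := by
    ext X; simp only [YofX, g, c, add_assoc]
  have hdY : deriv (YofX t) = fun X => deriv (fun y => g √y) (X + c) := by
    ext X; rw [hY]; exact deriv_comp_add_const (fun y => g √y) c X
  have hcomp {F F' : ℝ → ℝ} (hF : ∀ x, x ≠ 0 → HasDerivAt F (F' x) x) {v : ℝ} (hv : 0 < v) :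
      HasDerivAt (fun v => F (2 * t * v)) (F' (2 * t * v) * (2 * t * 1)) v :=
    (hF _ (by positivity)).comp v ((hasDerivAt_id' v).const_mul (2 * t))
  have hg (v : ℝ) (hv : 0 < v) :
      HasDerivAt g (2 * (v + Z (2 * t * v)) * (1 + 2 * t * Z' (2 * t * v))) v :=
    (((hasDerivAt_id' v).fun_add (hcomp (fun _ => hasDerivAt_Z) hv)).fun_pow 2).congr_deriv
      (by ring)
  have hg' := (((hasDerivAt_id' u).fun_add (hcomp (fun _ => hasDerivAt_Z) hu)).const_mul 2).fun_mul
    ((hcomp (fun _ => hasDerivAt_Z') hu).const_mul (2 * t) |>.const_add 1)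
  rw [hX, hdY, deriv_comp_add_const, sub_add_cancel, deriv_deriv_comp_sqrt hu hg hg', hr_eq,
    hu_def]
  field_simp
  ring

theorem stmt_7 (t : ℝ) (ht : 0 < t) (r : ℝ) (hr : 0 < r) :
    deriv (deriv (YofX t)) (-3 / (2 * t) + r ^ 2 / (4 * t ^ 2) - 1) ≤ 0 := by
  rw [deriv_deriv_YofX ht hr]
  exact add_nonpos
    (mul_nonpos_of_nonneg_of_nonpos (by positivity) (sq_mul_Z''_add_mul_Z'_sub_Z_nonpos hr))
    (mul_nonpos_of_nonneg_of_nonpos (by positivity)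
      (mul_Z_mul_Z''_add_mul_Z'_sq_sub_Z_mul_Z'_nonpos hr))
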